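/- Let A : ℝ^d → ℝ be twice continuously differentiable, fix φ* and φ with δ := φ − φ*, φ_s := φ* + sδ, and suppose 0 < α and α‖v‖² ≤ vᵀ∇²A(φ_s)v ≤ β‖v‖² for all s ∈ [0,1] and v ∈ ℝ^d. Set L(φ) := D_A(φ*‖φ). Then (2α/β)·L(φ) ≤ ⟨∇L(φ), φ − φ*⟩ ≤ (2β/α)·L(φ). -/

import Mathlib

open scoped RealInnerProductSpace

/-- Bregman divergence of `A`. -/
noncomputable def bregman {d : ℕ} (A : EuclideanSpace ℝ (Fin d) → ℝ)
    (u v : EuclideanSpace ℝ (Fin d)) : ℝ :=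
  A u - A v - ⟪gradient A v, u - v⟫

open scoped Gradient
open InnerProductSpace Set

/-!
Write `δ = φ - φ*` and `H = D(∇A)`. Along the segment `φ_s = φ* + s δ` the Bregman divergence
`F s = D_A(φ*‖φ_s)` vanishes at `s = 0` and has derivative `s ⟪δ, H(φ_s) δ⟫`, which the spectral
bounds pin between `α ‖δ‖² s` and `β ‖δ‖² s`; integrating gives `α ‖δ‖² ≤ 2 L(φ) ≤ β ‖δ‖²`.
The same derivative formula at `s = 1` shows `⟪∇L(φ), δ⟫ = ⟪δ, H(φ) δ⟫ ∈ [α ‖δ‖², β ‖δ‖²]`.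
Two quantities in the same interval `[α n, β n]` have ratio in `[α/β, β/α]`.
-/

theorem ContDiff.differentiable_gradient {F : Type*} [NormedAddCommGroup F]
    [InnerProductSpace ℝ F] [CompleteSpace F] {f : F → ℝ} (hf : ContDiff ℝ 2 f) :
    Differentiable ℝ (∇ f) :=
  (toDual ℝ F).symm.toContinuousLinearEquiv.differentiable.comp
    ((hf.fderiv_right (m := 1) (by norm_num)).differentiable one_ne_zero)

theorem add_half_le_of_mul_le_deriv {F f' : ℝ → ℝ} {c : ℝ}
    (hF : ∀ s ∈ Icc (0 : ℝ) 1, HasDerivAt F (f' s) s)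
    (hf' : ∀ s ∈ Icc (0 : ℝ) 1, c * s ≤ f' s) :
    F 0 + c / 2 ≤ F 1 := by
  have hG : ∀ s ∈ Icc (0 : ℝ) 1, HasDerivAt (fun s => F s - c * s ^ 2 / 2) (f' s - c * s) s :=
    fun s hs => ((hF s hs).sub (((hasDerivAt_pow 2 s).const_mul c).div_const 2)).congr_deriv
      (by ring)
  have hmono : MonotoneOn (fun s => F s - c * s ^ 2 / 2) (Icc 0 1) :=
    monotoneOn_of_hasDerivWithinAt_nonneg (convex_Icc 0 1)
      (fun s hs => (hG s hs).continuousAt.continuousWithinAt)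
      (fun s hs => (hG s (interior_subset hs)).hasDerivWithinAt)
      (fun s hs => sub_nonneg.2 (hf' s (interior_subset hs)))
  have := hmono (left_mem_Icc.2 zero_le_one) (right_mem_Icc.2 zero_le_one) zero_le_one
  norm_num at this
  linarith

theorem le_add_half_of_deriv_le_mul {F f' : ℝ → ℝ} {c : ℝ}
    (hF : ∀ s ∈ Icc (0 : ℝ) 1, HasDerivAt F (f' s) s)
    (hf' : ∀ s ∈ Icc (0 : ℝ) 1, f' s ≤ c * s) :
    F 1 ≤ F 0 + c / 2 := by
  have := add_half_le_of_mul_le_deriv (F := fun s => -F s) (c := -c)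
    (fun s hs => (hF s hs).neg) (fun s hs => by linarith [hf' s hs])
  linarith

theorem two_mul_div_mul_le_and_le_of_bounds {α β n q L : ℝ} (hα : 0 < α) (hn : 0 ≤ n)
    (hq₁ : α * n ≤ q) (hq₂ : q ≤ β * n) (hL₁ : α * n / 2 ≤ L) (hL₂ : L ≤ β * n / 2) :
    2 * α / β * L ≤ q ∧ q ≤ 2 * β / α * L := by
  rcases hn.eq_or_lt with rfl | hn
  · obtain rfl : L = 0 := by linarith
    obtain rfl : q = 0 := by linarith
    simp
  have hβ : 0 < β := by nlinarith
  constructor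
  · rw [div_mul_eq_mul_div, div_le_iff₀ hβ]
    nlinarith
  · rw [div_mul_eq_mul_div, le_div_iff₀ hα]
    nlinarith

section Bregman

variable {d : ℕ} {A : EuclideanSpace ℝ (Fin d) → ℝ}

theorem hasFDerivAt_bregman_right (u : EuclideanSpace ℝ (Fin d)) {ψ : EuclideanSpace ℝ (Fin d)}
    (hA : DifferentiableAt ℝ A ψ) (hgA : DifferentiableAt ℝ (∇ A) ψ) :
    HasFDerivAt (bregman A u) ((innerSL ℝ (ψ - u)).comp (fderiv ℝ (∇ A) ψ)) ψ := by
  have hsub : HasFDerivAt (fun x => u - x) (-ContinuousLinearMap.id ℝ _) ψ := by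
    simpa using (hasFDerivAt_id ψ).const_sub u
  refine (((hasFDerivAt_const (A u) ψ).sub hA.hasFDerivAt).sub
    (hgA.hasFDerivAt.inner ℝ hsub)).congr_fderiv ?_
  ext v
  simp only [sub_apply, zero_apply, neg_apply, ContinuousLinearMap.comp_apply,
    ContinuousLinearMap.prod_apply, ContinuousLinearMap.id_apply, fderivInnerCLM_apply,
    innerSL_apply_apply, ← inner_gradient_left, inner_neg_right, inner_sub_right, inner_sub_left]
  rw [real_inner_comm ψ, real_inner_comm u]
  ring

theorem inner_gradient_bregman_right (u : EuclideanSpace ℝ (Fin d))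
    {ψ : EuclideanSpace ℝ (Fin d)}
    (hA : DifferentiableAt ℝ A ψ) (hgA : DifferentiableAt ℝ (∇ A) ψ) :
    ⟪∇ (bregman A u) ψ, ψ - u⟫ = ⟪ψ - u, fderiv ℝ (∇ A) ψ (ψ - u)⟫ := by
  rw [inner_gradient_left, (hasFDerivAt_bregman_right u hA hgA).fderiv]
  rfl

theorem hasDerivAt_bregman_segment (hA : Differentiable ℝ A) (hgA : Differentiable ℝ (∇ A))
    (u w : EuclideanSpace ℝ (Fin d)) (s : ℝ) :
    HasDerivAt (fun s : ℝ => bregman A u (u + s • (w - u)))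
      (s * ⟪w - u, fderiv ℝ (∇ A) (u + s • (w - u)) (w - u)⟫) s := by
  have hseg : HasDerivAt (fun s : ℝ => u + s • (w - u)) (w - u) s := by
    simpa using ((hasDerivAt_id s).smul_const (w - u)).const_add u
  refine ((hasFDerivAt_bregman_right u (hA _) (hgA _)).comp_hasDerivAt s hseg).congr_deriv ?_
  rw [ContinuousLinearMap.comp_apply, innerSL_apply_apply, add_sub_cancel_left,
    real_inner_smul_left]

theorem mul_norm_sq_div_two_le_bregman (hA : Differentiable ℝ A) (hgA : Differentiable ℝ (∇ A))
    {u w : EuclideanSpace ℝ (Fin d)} {α : ℝ}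
    (h : ∀ s ∈ Icc (0 : ℝ) 1,
      α * ‖w - u‖ ^ 2 ≤ ⟪w - u, fderiv ℝ (∇ A) (u + s • (w - u)) (w - u)⟫) :
    α * ‖w - u‖ ^ 2 / 2 ≤ bregman A u w := by
  have := add_half_le_of_mul_le_deriv (fun s _ => hasDerivAt_bregman_segment hA hgA u w s)
    (fun s hs => (mul_comm _ _).trans_le (mul_le_mul_of_nonneg_left (h s hs) hs.1))
  simpa [bregman] using this

theorem bregman_le_mul_norm_sq_div_two (hA : Differentiable ℝ A) (hgA : Differentiable ℝ (∇ A))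
    {u w : EuclideanSpace ℝ (Fin d)} {β : ℝ}
    (h : ∀ s ∈ Icc (0 : ℝ) 1,
      ⟪w - u, fderiv ℝ (∇ A) (u + s • (w - u)) (w - u)⟫ ≤ β * ‖w - u‖ ^ 2) :
    bregman A u w ≤ β * ‖w - u‖ ^ 2 / 2 := by
  have := le_add_half_of_deriv_le_mul (fun s _ => hasDerivAt_bregman_segment hA hgA u w s)
    (fun s hs => (mul_le_mul_of_nonneg_left (h s hs) hs.1).trans_eq (mul_comm _ _))
  simpa [bregman] using this

end Bregman

/-- One-point Polyak–Łojasiewicz-type inequality with ray-wise spectral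
constants `α, β` bounding the Hessian of `A` along the ray from `φ*` to `φ`. -/
theorem one_point_PL_bounds {d : ℕ}
    (A : EuclideanSpace ℝ (Fin d) → ℝ)
    (hA : ContDiff ℝ 2 A)
    (φstar φ : EuclideanSpace ℝ (Fin d)) (α β : ℝ)
    (hα : 0 < α)
    (hspec : ∀ s ∈ Set.Icc (0:ℝ) 1, ∀ v : EuclideanSpace ℝ (Fin d),
      α * ‖v‖ ^ 2 ≤ ⟪v, fderiv ℝ (gradient A) (φstar + s • (φ - φstar)) v⟫ ∧
      ⟪v, fderiv ℝ (gradient A) (φstar + s • (φ - φstar)) v⟫ ≤ β * ‖v‖ ^ 2)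
    (L : EuclideanSpace ℝ (Fin d) → ℝ)
    (hL : ∀ ψ, L ψ = bregman A φstar ψ) :
    2 * α / β * L φ ≤ ⟪gradient L φ, φ - φstar⟫ ∧
      ⟪gradient L φ, φ - φstar⟫ ≤ 2 * β / α * L φ := by
  obtain rfl : L = bregman A φstar := funext hL
  have hAd : Differentiable ℝ A := hA.differentiable two_ne_zero
  have hgA : Differentiable ℝ (∇ A) := hA.differentiable_gradient
  have hHφ := hspec 1 (right_mem_Icc.2 zero_le_one) (φ - φstar)
  rw [one_smul, add_sub_cancel] at hHφ
  rw [inner_gradient_bregman_right φstar (hAd φ) (hgA φ)]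
  exact two_mul_div_mul_le_and_le_of_bounds hα (sq_nonneg _) hHφ.1 hHφ.2
    (mul_norm_sq_div_two_le_bregman hAd hgA fun s hs => (hspec s hs _).1)
    (bregman_le_mul_norm_sq_div_two hAd hgA fun s hs => (hspec s hs _).2)
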